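/- arXiv:2003.11808 — 5 statements merged into one kernel-verified Lean document; each statement's English description precedes it below -/
import Mathlib

section
/- Let ξ be a ranking function for the product automaton P with upper bound α = |X_P| − |F_P| + 1. Then for every state x ∈ X_P with ξ(x) < α, there exists a finite event sequence s ∈ Σ_P* such that δ_P(x,s) is defined and δ_P(x,s) ∈ F_P (where δ_P is extended to finite event sequences in the usual way). -/
/-- A deterministic finite automaton with partial transitions:
states `X`, events `E`, partial transition function `delta` (modeled with `Option`),
uncontrollable events `Eu` (the controllable ones being the complement),
accepting states `F`, and initial state `init`. -/
structure PAut (X E : Type*) [Fintype X] [DecidableEq X] [Fintype E] [DecidableEq E] where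
  delta : X → E → Option X
  Eu : Finset E
  F : Finset X
  init : X

variable {X E : Type*} [Fintype X] [DecidableEq X] [Fintype E] [DecidableEq E]

namespace PAut

/-- `Σ_P(x)`: the events enabled (defined) at `x`. -/
def enabled (P : PAut X E) (x : X) : Finset E :=
  Finset.univ.filter fun σ => (P.delta x σ).isSome

/-- `Σ_{P,u}(x) = Σ_P(x) ∩ Σ_{P,u}`. -/
def enabledU (P : PAut X E) (x : X) : Finset E := P.enabled x ∩ P.Eu

/-- `Σ_{P,c}(x) = Σ_P(x) ∩ Σ_{P,c}`. -/
def enabledC (P : PAut X E) (x : X) : Finset E := P.enabled x \ P.Eu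

/-- `δ_P(x,σ)` as a total function; it agrees with `delta` on enabled events. -/
def dest (P : PAut X E) (x : X) (σ : E) : X := (P.delta x σ).getD x

/-- `suc_P(x) = { δ_P(x,σ) : σ ∈ Σ_P(x) }`. -/
def suc (P : PAut X E) (x : X) : Finset X := (P.enabled x).image (P.dest x)

/-- Extension of `δ_P` to finite event sequences. -/
def deltaStar (P : PAut X E) (x : X) : List E → Option X
  | [] => some x
  | σ :: s => (P.delta x σ).bind fun y => P.deltaStar y s

/-- The upper bound `α = |X_P| − |F_P| + 1`. -/
def alpha (P : PAut X E) : ℕ := Fintype.card X - P.F.card + 1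

/-- The indicator `I(x)`: `1` if `x ∉ F_P`, `0` if `x ∈ F_P`. -/
def ind (P : PAut X E) (x : X) : ℕ := if x ∈ P.F then 0 else 1

/-- `ξ` is a ranking function for `P`:
(1) `ξ x = 0 ↔ x ∈ F_P`;
(2) if no event is enabled at `x` then `ξ x = α`;
if some event is enabled but no uncontrollable one
(equivalently, the set of enabled controllable events is nonempty and the set of
enabled uncontrollable events is empty) then
`ξ x = min (min_{σ ∈ Σ_{P,c}(x)} ξ(δ_P(x,σ)) + I x) α`;
otherwise (some uncontrollable event is enabled)
`ξ x = min (max_{σ ∈ Σ_{P,u}(x)} ξ(δ_P(x,σ)) + I x) α`. -/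
def IsRanking (P : PAut X E) (ξ : X → ℕ) : Prop :=
  ∀ x : X,
    (ξ x = 0 ↔ x ∈ P.F) ∧
    (P.enabled x = ∅ → ξ x = P.alpha) ∧
    (∀ hne : (P.enabledC x).Nonempty, P.enabledU x = ∅ →
      ξ x = min (((P.enabledC x).inf' hne fun σ => ξ (P.dest x σ)) + P.ind x) P.alpha) ∧
    (∀ hne : (P.enabledU x).Nonempty,
      ξ x = min (((P.enabledU x).sup' hne fun σ => ξ (P.dest x σ)) + P.ind x) P.alpha)

/-- `η` is a permissiveness function: `η 0 ≤ α`, `η` is nonincreasing,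
and `η k̄ = 0` for some `k̄`. -/
def IsPerm (P : PAut X E) (η : ℕ → ℝ) : Prop :=
  η 0 ≤ (P.alpha : ℝ) ∧ (∀ k : ℕ, η (k + 1) ≤ η k) ∧ ∃ kb : ℕ, η kb = 0

/-- `online(x,k) = { σ ∈ Σ_P(x) : ξ(δ_P(x,σ)) < max{ξ(x), η(k)} }`. -/
noncomputable def online (P : PAut X E) (ξ : X → ℕ) (η : ℕ → ℝ) (x : X) (k : ℕ) :
    Finset E :=
  (P.enabled x).filter fun σ => (ξ (P.dest x σ) : ℝ) < max (ξ x : ℝ) (η k)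

end PAut


lemma delta_eq_some_dest {X E : Type*} [Fintype X] [DecidableEq X] [Fintype E]
    [DecidableEq E] (P : PAut X E) {x : X} {σ : E} (h : σ ∈ P.enabled x) :
    P.delta x σ = some (P.dest x σ) := by
  simp only [PAut.enabled, Finset.mem_filter] at h
  obtain ⟨y, hy⟩ := Option.isSome_iff_exists.mp h.2
  simp [PAut.dest, hy]

lemma stmt_1_aux {X E : Type*} [Fintype X] [DecidableEq X] [Fintype E] [DecidableEq E]
    (P : PAut X E) (ξ : X → ℕ) (hξ : P.IsRanking ξ) :
    ∀ n (x : X), ξ x = n → ξ x < P.alpha →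
    ∃ (s : List E) (y : X), P.deltaStar x s = some y ∧ y ∈ P.F := by
  intro n
  induction n using Nat.strong_induction_on with
  | _ n ih =>
    intro x hn hα
    obtain ⟨h0, h1, h2, h3⟩ := hξ x
    rcases Nat.eq_zero_or_pos n with hz | hpos
    · subst hz
      exact ⟨[], x, rfl, h0.mp hn⟩
    · have hxF : x ∉ P.F := by
        intro h; rw [h0.mpr h] at hn; omega
      have hind : P.ind x = 1 := by simp [PAut.ind, hxF]
      have hen : P.enabled x ≠ ∅ := by
        intro h; have := h1 h; omega
      -- find σ enabled with ξ (dest x σ) < n and < α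
      have key : ∃ σ ∈ P.enabled x, ξ (P.dest x σ) < n := by
        rcases Finset.eq_empty_or_nonempty (P.enabledU x) with hU | hU
        · have hC : P.enabledC x = P.enabled x := by
            ext σ
            simp only [PAut.enabledC, Finset.mem_sdiff, and_iff_left_iff_imp]
            intro hσ hu
            have : σ ∈ P.enabledU x := Finset.mem_inter.mpr ⟨hσ, hu⟩
            simp [hU] at this
          have hCne : (P.enabledC x).Nonempty := by
            rw [hC]; exact Finset.nonempty_iff_ne_empty.mpr hen
          have := h2 hCne hU
          rw [hind, hn] at this
          have hmin : (P.enabledC x).inf' hCne (fun σ => ξ (P.dest x σ)) + 1 = n := by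
            omega
          obtain ⟨σ, hσ, hval⟩ := Finset.exists_mem_eq_inf' hCne (fun σ => ξ (P.dest x σ))
          exact ⟨σ, (hC ▸ hσ : σ ∈ P.enabled x), by omega⟩
        · have := h3 hU
          rw [hind, hn] at this
          have hmax : (P.enabledU x).sup' hU (fun σ => ξ (P.dest x σ)) + 1 = n := by
            omega
          obtain ⟨σ, hσ⟩ := hU
          have hle := Finset.le_sup' (fun σ => ξ (P.dest x σ)) hσ
          exact ⟨σ, Finset.mem_of_mem_inter_left hσ, by omega⟩
      obtain ⟨σ, hσ, hlt⟩ := key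
      obtain ⟨s, y, hs, hy⟩ := ih (ξ (P.dest x σ)) (hn ▸ hlt) (P.dest x σ) rfl
        (lt_trans hlt (hn ▸ hα))
      refine ⟨σ :: s, y, ?_, hy⟩
      simp [PAut.deltaStar, delta_eq_some_dest P hσ, hs]

/-- from every state with `ξ x < α` some accepting state is
reachable by a finite event sequence. -/
theorem stmt_1 {X E : Type*} [Fintype X] [DecidableEq X] [Fintype E] [DecidableEq E]
    (P : PAut X E) (ξ : X → ℕ) (hξ : P.IsRanking ξ)
    (x : X) (hα : ξ x < P.alpha) :
    ∃ (s : List E) (y : X), P.deltaStar x s = some y ∧ y ∈ P.F := by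
  exact stmt_1_aux P ξ hξ (ξ x) x rfl hα
end

section
/- Let ξ be a ranking function for the product automaton P with upper bound α = |X_P| − |F_P| + 1. Then for every state x ∈ X_P with ξ(x) < α and every finite sequence u of uncontrollable events (u ∈ Σ_{P,u}*), if δ_P(x,u) is defined then ξ(δ_P(x,u)) < α. -/
variable {X E : Type*} [Fintype X] [DecidableEq X] [Fintype E] [DecidableEq E]

namespace PAut

variable {P : PAut X E}

theorem mem_enabledU_of_delta_eq_some {x z : X} {σ : E} (hσ : σ ∈ P.Eu)
    (hz : P.delta x σ = some z) : σ ∈ P.enabledU x := by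
  simp [enabledU, enabled, hσ, hz]

theorem dest_eq_of_delta_eq_some {x z : X} {σ : E} (hz : P.delta x σ = some z) :
    P.dest x σ = z := by
  simp [dest, hz]

theorem IsRanking.dest_lt_alpha {ξ : X → ℕ} (hξ : P.IsRanking ξ) {x : X}
    (hα : ξ x < P.alpha) {σ : E} (hσ : σ ∈ P.enabledU x) :
    ξ (P.dest x σ) < P.alpha := by
  have hne : (P.enabledU x).Nonempty := ⟨σ, hσ⟩
  have hsup : (P.enabledU x).sup' hne (fun τ => ξ (P.dest x τ)) + P.ind x < P.alpha := by
    rw [(hξ x).2.2.2 hne] at hα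
    exact min_lt_iff.1 hα |>.resolve_right (lt_irrefl _)
  calc ξ (P.dest x σ) ≤ (P.enabledU x).sup' hne (fun τ => ξ (P.dest x τ)) :=
        Finset.le_sup' (fun τ => ξ (P.dest x τ)) hσ
    _ < P.alpha := by omega

end PAut

/-- from a state with `ξ x < α`, any defined sequence of
uncontrollable events leads to a state of rank `< α`. -/
theorem stmt_3 {X E : Type*} [Fintype X] [DecidableEq X] [Fintype E] [DecidableEq E]
    (P : PAut X E) (ξ : X → ℕ) (hξ : P.IsRanking ξ)
    (x : X) (hα : ξ x < P.alpha)
    (u : List E) (hu : ∀ σ ∈ u, σ ∈ P.Eu)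
    (y : X) (hy : P.deltaStar x u = some y) :
    ξ y < P.alpha := by
  induction u generalizing x with
  | nil =>
    rw [PAut.deltaStar, Option.some.injEq] at hy
    exact hy ▸ hα
  | cons σ s ih =>
    rw [PAut.deltaStar, Option.bind_eq_some_iff] at hy
    obtain ⟨z, hz, hzy⟩ := hy
    have hσ : σ ∈ P.enabledU x :=
      PAut.mem_enabledU_of_delta_eq_some (hu σ List.mem_cons_self) hz
    have hz_lt : ξ z < P.alpha := PAut.dest_eq_of_delta_eq_some hz ▸ hξ.dest_lt_alpha hα hσ
    exact ih z hz_lt (fun τ hτ => hu τ (List.mem_cons_of_mem _ hτ)) hzy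
end

section
/- Let ξ be a ranking function for the product automaton P with upper bound α = |X_P| − |F_P| + 1, let η be a permissiveness function, and define online(x,k) = { σ ∈ Σ_P(x) : ξ(δ_P(x,σ)) < max{ξ(x), η(k)} }. Then for every state x ∈ X_P with 0 < ξ(x) < α and every step k ∈ ℕ, the set online(x,k) is nonempty. -/
variable {X E : Type*} [Fintype X] [DecidableEq X] [Fintype E] [DecidableEq E]

/-- if `0 < ξ x < α` then `online(x,k)` is nonempty for every `k`. -/
theorem stmt_5 {X E : Type*} [Fintype X] [DecidableEq X] [Fintype E] [DecidableEq E]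
    (P : PAut X E) (ξ : X → ℕ) (hξ : P.IsRanking ξ)
    (η : ℕ → ℝ) (hη : P.IsPerm η)
    (x : X) (h0 : 0 < ξ x) (hα : ξ x < P.alpha) (k : ℕ) :
    (P.online ξ η x k).Nonempty := by
  obtain ⟨h1, h2, h3, h4⟩ := hξ x
  have hF : x ∉ P.F := fun h => absurd (h1.mpr h) h0.ne'
  have hI : P.ind x = 1 := if_neg hF
  have hen : (P.enabled x).Nonempty := by
    rcases (P.enabled x).eq_empty_or_nonempty with he | h
    · exact absurd (h2 he) hα.ne
    · exact h
  by_cases hU : (P.enabledU x).Nonempty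
  · obtain ⟨σ, hσ⟩ := hU
    have hx := h4 ⟨σ, hσ⟩
    rw [hI] at hx
    have hle : ξ (P.dest x σ) ≤ (P.enabledU x).sup' ⟨σ, hσ⟩ (fun σ => ξ (P.dest x σ)) :=
      Finset.le_sup' (fun σ => ξ (P.dest x σ)) hσ
    have hlt : ξ (P.dest x σ) < ξ x := by omega
    refine ⟨σ, Finset.mem_filter.mpr ⟨(Finset.mem_inter.mp hσ).1, ?_⟩⟩
    exact lt_of_lt_of_le (by exact_mod_cast hlt) (le_max_left _ _)
  · have hUe : P.enabledU x = ∅ := Finset.not_nonempty_iff_eq_empty.mp hU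
    have hCeq : P.enabledC x = P.enabled x := by
      ext σ
      simp only [PAut.enabledC, Finset.mem_sdiff]
      constructor
      · exact fun h => h.1
      · intro h
        refine ⟨h, fun hu => ?_⟩
        have : σ ∈ P.enabledU x := Finset.mem_inter.mpr ⟨h, hu⟩
        simp [hUe] at this
    have hC : (P.enabledC x).Nonempty := hCeq ▸ hen
    have hx := h3 hC hUe
    rw [hI] at hx
    obtain ⟨σ, hσ, hval⟩ := Finset.exists_mem_eq_inf' hC (fun σ => ξ (P.dest x σ))
    have hlt : ξ (P.dest x σ) < ξ x := by omega
    have hσe : σ ∈ P.enabled x := hCeq ▸ hσ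
    refine ⟨σ, Finset.mem_filter.mpr ⟨hσe, ?_⟩⟩
    exact lt_of_lt_of_le (by exact_mod_cast hlt) (le_max_left _ _)
end

section
/- Let ξ be a ranking function for the product automaton P with upper bound α = |X_P| − |F_P| + 1. If a state x ∈ X_P admits a finite event sequence s = s_0 s_1 ⋯ s_{n-1} ∈ Σ_P* along which the rank strictly decreases at every step and which ends in rank 0 — that is, ξ(x) > ξ(δ_P(x, s_0)) > ξ(δ_P(x, s_0 s_1)) > ⋯ > ξ(δ_P(x, s)) = 0 — then δ_P(x,s) ∈ F_P. More generally, any state y ∈ X_P with ξ(y) = 0 belongs to F_P, and from every state x with 0 < ξ(x) < α there exists a finite event sequence of length at most ξ(x) reaching a state in F_P. -/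
variable {X E : Type*} [Fintype X] [DecidableEq X] [Fintype E] [DecidableEq E]

/-!
Below `α` the rank equations are not saturated by the cap `α`, so at a non-accepting state of
rank `< α` the event realising the min (controllable case) or the max (uncontrollable case)
leads to a state of rank exactly one less. Following such events from a state of rank `r < α`
reaches rank `0`, i.e. an accepting state, after `r` steps.
-/

namespace PAut

lemma delta_eq_some_dest {P : PAut X E} {x : X} {σ : E} (h : σ ∈ P.enabled x) :
    P.delta x σ = some (P.dest x σ) := by
  simp only [enabled, Finset.mem_filter] at h
  obtain ⟨z, hz⟩ := Option.isSome_iff_exists.mp h.2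
  simp [dest, hz]

lemma enabledC_nonempty_of_enabledU_eq_empty {P : PAut X E} {x : X}
    (hen : P.enabled x ≠ ∅) (hU : P.enabledU x = ∅) : (P.enabledC x).Nonempty := by
  rw [enabledC, Finset.sdiff_nonempty]
  intro hsub
  rw [enabledU, Finset.inter_eq_left.mpr hsub] at hU
  exact hen hU

lemma IsRanking.mem_F_iff {P : PAut X E} {ξ : X → ℕ} (hξ : P.IsRanking ξ) {x : X} :
    x ∈ P.F ↔ ξ x = 0 :=
  (hξ x).1.symm

lemma IsRanking.exists_enabled_rank_add_one_eq {P : PAut X E} {ξ : X → ℕ}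
    (hξ : P.IsRanking ξ) {x : X} (hx : 0 < ξ x) (hα : ξ x < P.alpha) :
    ∃ σ ∈ P.enabled x, ξ (P.dest x σ) + 1 = ξ x := by
  obtain ⟨-, hdead, hctrl, hunctrl⟩ := hξ x
  have hind : P.ind x = 1 := by
    simp [ind, hξ.mem_F_iff, hx.ne']
  by_cases hU : (P.enabledU x).Nonempty
  · obtain ⟨σ, hσ, hmax⟩ := Finset.exists_mem_eq_sup' hU fun σ => ξ (P.dest x σ)
    have hrank := hunctrl hU
    rw [hind, hmax] at hrank
    exact ⟨σ, Finset.mem_of_mem_inter_left hσ, by omega⟩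
  · have hen : P.enabled x ≠ ∅ := fun h => by have := hdead h; omega
    have hUe := Finset.not_nonempty_iff_eq_empty.mp hU
    have hC := enabledC_nonempty_of_enabledU_eq_empty hen hUe
    obtain ⟨σ, hσ, hmin⟩ := Finset.exists_mem_eq_inf' hC fun σ => ξ (P.dest x σ)
    have hrank := hctrl hC hUe
    rw [hind, hmin] at hrank
    exact ⟨σ, Finset.mem_sdiff.mp hσ |>.1, by omega⟩

lemma IsRanking.exists_deltaStar_mem_F {P : PAut X E} {ξ : X → ℕ} (hξ : P.IsRanking ξ)
    (x : X) (hα : ξ x < P.alpha) :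
    ∃ (s : List E) (y : X), s.length ≤ ξ x ∧ P.deltaStar x s = some y ∧ y ∈ P.F := by
  induction hr : ξ x using Nat.strong_induction_on generalizing x with
  | _ r ih =>
    rcases Nat.eq_zero_or_pos r with rfl | hpos
    · exact ⟨[], x, le_rfl, rfl, hξ.mem_F_iff.mpr hr⟩
    obtain ⟨σ, hσ, hstep⟩ := hξ.exists_enabled_rank_add_one_eq (hr ▸ hpos) hα
    obtain ⟨s, y, hlen, hs, hy⟩ := ih _ (by omega) (P.dest x σ) (by omega) rfl
    refine ⟨σ :: s, y, by simp only [List.length_cons]; omega, ?_, hy⟩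
    simp [deltaStar, delta_eq_some_dest hσ, hs]

end PAut

/-- a strictly rank-decreasing finite sequence ending in rank `0`
ends in an accepting state; any state of rank `0` is accepting; and from any
state with `0 < ξ x < α` an accepting state is reachable in at most `ξ x` steps. -/
theorem stmt_10 {X E : Type*} [Fintype X] [DecidableEq X] [Fintype E] [DecidableEq E]
    (P : PAut X E) (ξ : X → ℕ) (hξ : P.IsRanking ξ) :
    (∀ (x y : X) (s : List E),
      P.deltaStar x s = some y → ξ y = 0 →
      (∀ i < s.length, ∀ a b : X,
        P.deltaStar x (s.take i) = some a →
        P.deltaStar x (s.take (i + 1)) = some b → ξ b < ξ a) →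
      y ∈ P.F) ∧
    (∀ y : X, ξ y = 0 → y ∈ P.F) ∧
    (∀ x : X, 0 < ξ x → ξ x < P.alpha →
      ∃ (s : List E) (y : X), s.length ≤ ξ x ∧ P.deltaStar x s = some y ∧ y ∈ P.F) :=
  ⟨fun _ _ _ _ hy _ => hξ.mem_F_iff.mpr hy, fun _ hy => hξ.mem_F_iff.mpr hy,
    fun x _ hα => hξ.exists_deltaStar_mem_F x hα⟩
end

section
/- Let ξ be a ranking function for the product automaton P with upper bound α = |X_P| − |F_P| + 1. If a state x ∈ X_P satisfies 0 < ξ(x) and every successor x' ∈ suc_P(x) satisfies ξ(x) ≤ ξ(x'), then ξ(x) = α. (Equivalently: from any nonaccepting state whose rank is below α, the rank can strictly decrease in one step.) -/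
variable {X E : Type*} [Fintype X] [DecidableEq X] [Fintype E] [DecidableEq E]

/-- if `0 < ξ x` and no successor has strictly smaller rank,
then `ξ x = α`. -/
theorem stmt_12 {X E : Type*} [Fintype X] [DecidableEq X] [Fintype E] [DecidableEq E]
    (P : PAut X E) (ξ : X → ℕ) (hξ : P.IsRanking ξ)
    (x : X) (h0 : 0 < ξ x) (hsuc : ∀ x' ∈ P.suc x, ξ x ≤ ξ x') :
    ξ x = P.alpha := by
  obtain ⟨h1, h2, h3, h4⟩ := hξ x
  by_cases he : P.enabled x = ∅
  · exact h2 he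
  have hxF : x ∉ P.F := fun h => h0.ne' (h1.mpr h)
  have hind : P.ind x = 1 := if_neg hxF
  by_cases hu : (P.enabledU x).Nonempty
  · have heq := h4 hu
    obtain ⟨σ, hσ, hmax⟩ := Finset.exists_mem_eq_sup' hu fun σ => ξ (P.dest x σ)
    have hσe : σ ∈ P.enabled x := Finset.mem_of_mem_inter_left hσ
    have hle := hsuc _ (Finset.mem_image_of_mem _ hσe)
    rw [hind, hmax] at heq
    omega
  · have hcne : (P.enabledC x).Nonempty := by
      obtain ⟨σ, hσ⟩ := Finset.nonempty_iff_ne_empty.mpr he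
      refine ⟨σ, Finset.mem_sdiff.mpr ⟨hσ, fun h => hu ⟨σ, Finset.mem_inter.mpr ⟨hσ, h⟩⟩⟩⟩
    have heq := h3 hcne (Finset.not_nonempty_iff_eq_empty.mp hu)
    have hge : ξ x ≤ (P.enabledC x).inf' hcne fun σ => ξ (P.dest x σ) := by
      apply Finset.le_inf'
      intro σ hσ
      exact hsuc _ (Finset.mem_image_of_mem _ (Finset.mem_sdiff.mp hσ).1)
    rw [hind] at heq
    omega
end
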